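/- arXiv:2105.05565 — 7 statements merged into one kernel-verified Lean document; each statement's English description precedes it below -/
import Mathlib

section
/- Let A be an m×m real symmetric positive definite matrix, b ∈ ℝ^m, and S ∈ ℝ^{m×τ} a matrix with full column rank (so that SᵀAS is symmetric positive definite, hence invertible). For any w^k ∈ ℝ^m, the vector w⁺ = w^k − S (SᵀAS)⁻¹ Sᵀ (A w^k − b) satisfies the sketched equation Sᵀ A w⁺ = Sᵀ b, and for every w ∈ ℝ^m with Sᵀ A w = Sᵀ b one has ‖w⁺ − w^k‖_A ≤ ‖w − w^k‖_A, with equality only if w = w⁺. In other words, w⁺ is the unique projection, in the A-norm, of w^k onto the affine set {w : Sᵀ A w = Sᵀ b}. -/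
open Matrix

/-- For a symmetric positive definite `‖·‖_M` we use `√(uᵀ M u)`. -/
noncomputable def normW {m : ℕ} (W : Matrix (Fin m) (Fin m) ℝ) (u : Fin m → ℝ) : ℝ :=
  Real.sqrt (u ⬝ᵥ (W *ᵥ u))

private lemma dot_symm {m : ℕ} {A : Matrix (Fin m) (Fin m) ℝ} (hA : Aᵀ = A)
    (u v : Fin m → ℝ) : u ⬝ᵥ (A *ᵥ v) = v ⬝ᵥ (A *ᵥ u) := by
  rw [dotProduct_mulVec, ← mulVec_transpose, hA, dotProduct_comm]

/-- **The sketch-and-project update is the A-norm projection onto the sketched system.**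
If `A` is symmetric positive definite and `S` has full column rank, then `Sᵀ A S` is
positive definite (hence invertible), the update
`w⁺ = wᵏ − S (Sᵀ A S)⁻¹ Sᵀ (A wᵏ − b)` satisfies `Sᵀ A w⁺ = Sᵀ b`, and for every `w`
with `Sᵀ A w = Sᵀ b` one has `‖w⁺ − wᵏ‖_A ≤ ‖w − wᵏ‖_A`, with equality only if `w = w⁺`. -/
theorem sketch_and_project_is_projection {m τ : ℕ}
    (A : Matrix (Fin m) (Fin m) ℝ) (hA : A.PosDef) (b : Fin m → ℝ)
    (S : Matrix (Fin m) (Fin τ) ℝ) (hS : Function.Injective S.mulVec)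
    (wk : Fin m → ℝ) :
    let wplus := wk - S *ᵥ ((Sᵀ * A * S)⁻¹ *ᵥ (Sᵀ *ᵥ (A *ᵥ wk - b)))
    (Sᵀ * A * S).PosDef ∧
    Sᵀ *ᵥ (A *ᵥ wplus) = Sᵀ *ᵥ b ∧
    ∀ w : Fin m → ℝ, Sᵀ *ᵥ (A *ᵥ w) = Sᵀ *ᵥ b →
      normW A (wplus - wk) ≤ normW A (w - wk) ∧
      (normW A (wplus - wk) = normW A (w - wk) → w = wplus) := by
  intro wplus
  have hAsym : Aᵀ = A := by simpa using hA.1.eq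
  -- `Sᵀ A S` is positive definite
  have hB : (Sᵀ * A * S).PosDef := by
    apply PosDef.of_dotProduct_mulVec_pos
    · have := isHermitian_conjTranspose_mul_mul S hA.1
      simpa using this
    · intro x hx
      have hSx : S *ᵥ x ≠ 0 := by
        intro h
        apply hx
        apply hS
        simpa using h
      have key : x ⬝ᵥ ((Sᵀ * A * S) *ᵥ x) = (S *ᵥ x) ⬝ᵥ (A *ᵥ (S *ᵥ x)) := by
        rw [← mulVec_mulVec, ← mulVec_mulVec, dotProduct_mulVec, ← mulVec_transpose,
          transpose_transpose]
      have := hA.dotProduct_mulVec_pos hSx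
      simpa [key] using this
  have hdet : IsUnit (Sᵀ * A * S).det := (Matrix.isUnit_iff_isUnit_det _).mp hB.isUnit
  -- the sketched equation
  have hsk : Sᵀ *ᵥ (A *ᵥ wplus) = Sᵀ *ᵥ b := by
    show Sᵀ *ᵥ (A *ᵥ (wk - S *ᵥ ((Sᵀ * A * S)⁻¹ *ᵥ (Sᵀ *ᵥ (A *ᵥ wk - b))))) = Sᵀ *ᵥ b
    rw [mulVec_sub, mulVec_sub, mulVec_mulVec, mulVec_mulVec, mulVec_mulVec, mulVec_mulVec,
      Matrix.mul_nonsing_inv _ hdet, one_mulVec, mulVec_sub, Matrix.mulVec_mulVec]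
    abel
  refine ⟨hB, hsk, ?_⟩
  intro w hw
  -- decompose `w - wk = v + d` with `d = wplus - wk`
  set d := wplus - wk with hd
  set v := w - wplus with hv
  have hvd : w - wk = v + d := by rw [hv, hd]; abel
  -- orthogonality
  have horth : d ⬝ᵥ (A *ᵥ v) = 0 := by
    have hSAv : Sᵀ *ᵥ (A *ᵥ v) = 0 := by
      rw [hv, mulVec_sub, mulVec_sub, hw, hsk, sub_self]
    have hdeq : d = -(S *ᵥ ((Sᵀ * A * S)⁻¹ *ᵥ (Sᵀ *ᵥ (A *ᵥ wk - b)))) := by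
      rw [hd]; show wk - _ - wk = _; abel
    set y := (Sᵀ * A * S)⁻¹ *ᵥ (Sᵀ *ᵥ (A *ᵥ wk - b)) with hy
    have key : (S *ᵥ y) ⬝ᵥ (A *ᵥ v) = y ⬝ᵥ (Sᵀ *ᵥ (A *ᵥ v)) := by
      rw [dotProduct_mulVec y Sᵀ, vecMul_transpose]
    rw [hdeq, neg_dotProduct, key, hSAv, dotProduct_zero, neg_zero]
  have horth' : v ⬝ᵥ (A *ᵥ d) = 0 := by rw [dot_symm hAsym]; exact horth
  -- expansion of the quadratic form
  have hexp : (w - wk) ⬝ᵥ (A *ᵥ (w - wk)) = v ⬝ᵥ (A *ᵥ v) + d ⬝ᵥ (A *ᵥ d) := by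
    rw [hvd, mulVec_add, dotProduct_add, add_dotProduct, add_dotProduct, horth, horth']
    ring
  have hvnonneg : 0 ≤ v ⬝ᵥ (A *ᵥ v) := by
    have := hA.posSemidef.dotProduct_mulVec_nonneg v
    simpa using this
  have hdnonneg : 0 ≤ d ⬝ᵥ (A *ᵥ d) := by
    have := hA.posSemidef.dotProduct_mulVec_nonneg d
    simpa using this
  constructor
  · apply Real.sqrt_le_sqrt
    rw [hexp]
    linarith
  · intro heq
    have hw2 : 0 ≤ (w - wk) ⬝ᵥ (A *ᵥ (w - wk)) := by rw [hexp]; linarith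
    simp only [normW] at heq
    have h1 : d ⬝ᵥ (A *ᵥ d) = (w - wk) ⬝ᵥ (A *ᵥ (w - wk)) := by
      rw [← Real.sq_sqrt hdnonneg, ← Real.sq_sqrt hw2, heq]
    have hv0 : v ⬝ᵥ (A *ᵥ v) = 0 := by rw [hexp] at h1; linarith
    have : v = 0 := by
      by_contra hne
      have := hA.dotProduct_mulVec_pos hne
      simp only [star_trivial] at this
      linarith
    have := sub_eq_zero.mp (hv ▸ this)
    exact this
end

section
/- Let A be an m×m real symmetric positive definite matrix, b ∈ ℝ^m, w* = A⁻¹b, and let a finite sketch distribution be given by matrices S_1, …, S_q (each S_i ∈ ℝ^{m×τ_i} with Sᵀ_i A S_i invertible) and probabilities p_1, …, p_q ≥ 0 summing to 1. Set H_i = S_i (Sᵀ_i A S_i)⁻¹ Sᵀ_i and ρ = λ_min(A^{1/2} (Σ_i p_i H_i) A^{1/2}). Then 0 ≤ ρ ≤ 1, and for the sketch-and-project iterates w^{k+1}(ω) = w^k(ω) − H_{ω_k} (A w^k(ω) − b) driven by an i.i.d. index sequence ω (each coordinate equal to i with probability p_i), starting from any w^0 ∈ ℝ^m, one has for every t: E[‖w^t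 − w*‖²_A] ≤ (1 − ρ)^t ‖w^0 − w*‖²_A, and consequently E[‖A w^t − b‖²] ≤ (1 − ρ)^t λ_max(A) ‖w^0 − w*‖²_A, where the expectation is the weighted sum over all index sequences (ω_0,…,ω_{t−1}) ∈ {1,…,q}^t with weight Π_k p_{ω_k}. -/
/-!
Every `H_i A` is an `A`-orthogonal projection (`H_i A H_i = H_i`), so one step lowers the error
`e = w - w*` by exactly `‖H_i A e‖²_A = eᵀ A H_i A e` in the `A`-norm. Averaged over `i`, this
decrease is `xᵀ B x` with `x = A^{1/2} e` and `B = A^{1/2} (∑ p_i H_i) A^{1/2}`, while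
`xᵀ x = ‖e‖²_A`; the Rayleigh bound `xᵀ B x ≥ λ_min(B) xᵀ x` (from `λ_min(B) • 1 ≤ B` in the
Loewner order) therefore contracts the expected error by `1 - ρ` per step, and `ρ ≤ 1` because
the expected error is nonnegative. The residual bound follows from
`‖A e‖² = (A^{1/2} e)ᵀ A (A^{1/2} e) ≤ λ_max(A) ‖e‖²_A`.
-/

open Matrix

section

open scoped ComplexOrder

/-- The square root of a positive semidefinite matrix, as defined in the older Mathlib
(`Matrix.PosSemidef.sqrt`, since removed). -/
noncomputable def Matrix.PosSemidef.sqrt {n 𝕜 : Type*} [Fintype n] [DecidableEq n] [RCLike 𝕜]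
    {A : Matrix n n 𝕜} (hA : A.PosSemidef) : Matrix n n 𝕜 :=
  hA.1.eigenvectorUnitary.1 * diagonal ((↑) ∘ (√·) ∘ hA.1.eigenvalues) *
    (star hA.1.eigenvectorUnitary : Matrix n n 𝕜)

end

/-- `uᵀ W u`, the squared `W`-norm. -/
def normSqW {m : ℕ} (W : Matrix (Fin m) (Fin m) ℝ) (u : Fin m → ℝ) : ℝ :=
  u ⬝ᵥ (W *ᵥ u)

/-- The sketch-and-project iterates `w⁰, w¹, …` driven by a finite index sequence
`σ : Fin t → Fin q`: `w^{k+1} = w^k − H_{σ_k} (A w^k − b)`. -/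
noncomputable def spIter {m q : ℕ} (A : Matrix (Fin m) (Fin m) ℝ) (b w0 : Fin m → ℝ)
    (H : Fin q → Matrix (Fin m) (Fin m) ℝ) :
    (t : ℕ) → (Fin t → Fin q) → (Fin m → ℝ)
  | 0, _ => w0
  | t + 1, σ =>
      spIter A b w0 H t (fun k => σ k.castSucc)
        - H (σ (Fin.last t)) *ᵥ (A *ᵥ spIter A b w0 H t (fun k => σ k.castSucc) - b)

open scoped ComplexOrder MatrixOrder

namespace Matrix.PosSemidef

variable {n 𝕜 : Type*} [Fintype n] [DecidableEq n] [RCLike 𝕜] {A : Matrix n n 𝕜}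

theorem sqrt_eq_cfc (hA : A.PosSemidef) : hA.sqrt = cfc Real.sqrt A := by
  rw [hA.1.cfc_eq, IsHermitian.cfc, Unitary.conjStarAlgAut_apply, sqrt]

theorem isHermitian_sqrt (hA : A.PosSemidef) : hA.sqrt.IsHermitian := by
  rw [sqrt_eq_cfc]
  exact cfc_predicate _ _

theorem sqrt_mul_self (hA : A.PosSemidef) : hA.sqrt * hA.sqrt = A := by
  have hA' : IsSelfAdjoint A := hA.1
  conv_rhs => rw [← cfc_id' ℝ A]
  rw [sqrt_eq_cfc, ← cfc_mul ..]
  refine cfc_congr fun x hx => ?_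
  rw [hA.1.spectrum_real_eq_range_eigenvalues] at hx
  obtain ⟨j, rfl⟩ := hx
  exact Real.mul_self_sqrt (hA.eigenvalues_nonneg j)

end Matrix.PosSemidef

namespace Matrix.IsHermitian

variable {n : Type*} [Fintype n] [DecidableEq n] {B : Matrix n n ℝ}

theorem iInf_eigenvalues_mul_dotProduct_self_le (hB : B.IsHermitian) (x : n → ℝ) :
    (⨅ j, hB.eigenvalues j) * (x ⬝ᵥ x) ≤ x ⬝ᵥ (B *ᵥ x) := by
  have hle : algebraMap ℝ _ (⨅ j, hB.eigenvalues j) ≤ B := by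
    refine algebraMap_le_of_le_spectrum (ha := hB) fun r hr => ?_
    rw [hB.spectrum_real_eq_range_eigenvalues] at hr
    obtain ⟨j, rfl⟩ := hr
    exact ciInf_le (Set.finite_range _).bddBelow j
  simpa [sub_mulVec, Algebra.algebraMap_eq_smul_one, smul_mulVec, dotProduct_smul] using
    (le_iff.mp hle).dotProduct_mulVec_nonneg x

theorem dotProduct_mulVec_le_iSup_eigenvalues_mul (hB : B.IsHermitian) (x : n → ℝ) :
    x ⬝ᵥ (B *ᵥ x) ≤ (⨆ j, hB.eigenvalues j) * (x ⬝ᵥ x) := by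
  have hle : B ≤ algebraMap ℝ _ (⨆ j, hB.eigenvalues j) := by
    refine le_algebraMap_of_spectrum_le (ha := hB) fun r hr => ?_
    rw [hB.spectrum_real_eq_range_eigenvalues] at hr
    obtain ⟨j, rfl⟩ := hr
    exact le_ciSup (Set.finite_range _).bddAbove j
  simpa [sub_mulVec, Algebra.algebraMap_eq_smul_one, smul_mulVec, dotProduct_smul] using
    (le_iff.mp hle).dotProduct_mulVec_nonneg x

end Matrix.IsHermitian

theorem Matrix.nonsing_inv_mul_self_mul_nonsing_inv {n α : Type*} [Fintype n] [DecidableEq n]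
    [CommRing α] (K : Matrix n n α) : K⁻¹ * K * K⁻¹ = K⁻¹ := by
  by_cases hK : IsUnit K.det
  · rw [nonsing_inv_mul K hK, Matrix.one_mul]
  · simp [nonsing_inv_apply_not_isUnit K hK]

/-- When `Sᵀ A S` is invertible, `sketchProj A S * A` is the `A`-orthogonal projection onto the
range of `S`. -/
noncomputable def sketchProj {n k : Type*} [Fintype n] [Fintype k] [DecidableEq k]
    (A : Matrix n n ℝ) (S : Matrix n k ℝ) : Matrix n n ℝ :=
  S * (Sᵀ * A * S)⁻¹ * Sᵀ

section sketchProj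

variable {n k : Type*} [Fintype n] [Fintype k] [DecidableEq k] {A : Matrix n n ℝ}

theorem posSemidef_sketchProj (hA : A.PosSemidef) (S : Matrix n k ℝ) :
    (sketchProj A S).PosSemidef := by
  have hK := (hA.conjTranspose_mul_mul_same S).inv.mul_mul_conjTranspose_same S
  rw [conjTranspose_eq_transpose_of_trivial] at hK
  exact hK

theorem sketchProj_mul_mul_self (A : Matrix n n ℝ) (S : Matrix n k ℝ) :
    sketchProj A S * A * sketchProj A S = sketchProj A S := by
  calc sketchProj A S * A * sketchProj A S
      = S * ((Sᵀ * A * S)⁻¹ * (Sᵀ * A * S) * (Sᵀ * A * S)⁻¹) * Sᵀ := by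
        simp only [sketchProj, Matrix.mul_assoc]
    _ = sketchProj A S := by rw [nonsing_inv_mul_self_mul_nonsing_inv, sketchProj]

end sketchProj

section normSqW

variable {m : ℕ}

theorem normSqW_mulVec (W N : Matrix (Fin m) (Fin m) ℝ) (u : Fin m → ℝ) :
    normSqW W (N *ᵥ u) = normSqW (Nᵀ * W * N) u := by
  rw [normSqW, normSqW, ← mulVec_mulVec, ← mulVec_mulVec, dotProduct_mulVec u, vecMul_transpose]

theorem normSqW_sum_smul {q : ℕ} (c : Fin q → ℝ) (W : Fin q → Matrix (Fin m) (Fin m) ℝ)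
    (u : Fin m → ℝ) : normSqW (∑ i, c i • W i) u = ∑ i, c i * normSqW (W i) u := by
  simp only [normSqW, sum_mulVec, dotProduct_sum, smul_mulVec, dotProduct_smul, smul_eq_mul]

theorem Matrix.PosSemidef.normSqW_nonneg {W : Matrix (Fin m) (Fin m) ℝ} (hW : W.PosSemidef)
    (u : Fin m → ℝ) : 0 ≤ normSqW W u := by
  simpa [normSqW] using hW.dotProduct_mulVec_nonneg u

theorem Matrix.PosSemidef.normSqW_eq_dotProduct_sqrt {A : Matrix (Fin m) (Fin m) ℝ}
    (hA : A.PosSemidef) (u : Fin m → ℝ) :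
    normSqW A u = (hA.sqrt *ᵥ u) ⬝ᵥ (hA.sqrt *ᵥ u) := by
  have h := normSqW_mulVec 1 hA.sqrt u
  rw [normSqW, one_mulVec] at h
  rw [h, Matrix.mul_one, ← conjTranspose_eq_transpose_of_trivial, hA.isHermitian_sqrt.eq,
    hA.sqrt_mul_self]

theorem normSqW_sub_mulVec_mulVec {A M : Matrix (Fin m) (Fin m) ℝ} (hA : Aᵀ = A) (hM : Mᵀ = M)
    (hMAM : M * A * M = M) (u : Fin m → ℝ) :
    normSqW A (u - M *ᵥ (A *ᵥ u)) = normSqW A u - normSqW (A * M * A) u := by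
  have hu : u - M *ᵥ (A *ᵥ u) = (1 - M * A) *ᵥ u := by
    rw [sub_mulVec, one_mulVec, mulVec_mulVec]
  have hconj : (1 - M * A)ᵀ * A * (1 - M * A) = A - A * M * A := by
    rw [transpose_sub, transpose_one, transpose_mul, hA, hM]
    calc (1 - A * M) * A * (1 - M * A) = A - 2 • (A * M * A) + A * (M * A * M) * A := by
          noncomm_ring
      _ = A - A * M * A := by rw [hMAM]; noncomm_ring
  rw [hu, normSqW_mulVec, hconj, normSqW, normSqW, normSqW, sub_mulVec, dotProduct_sub]

theorem Matrix.PosDef.dotProduct_mulVec_self_le {A : Matrix (Fin m) (Fin m) ℝ}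
    (hA : A.PosDef) (u : Fin m → ℝ) :
    (A *ᵥ u) ⬝ᵥ (A *ᵥ u) ≤ (⨆ j, hA.1.eigenvalues j) * normSqW A u := by
  set s := hA.posSemidef.sqrt
  have hss : s * s = A := hA.posSemidef.sqrt_mul_self
  have hst : sᵀ = s := (isHermitian_iff_isSymm.mp hA.posSemidef.isHermitian_sqrt).eq
  have hres : (A *ᵥ u) ⬝ᵥ (A *ᵥ u) = normSqW A (s *ᵥ u) := by
    have h := normSqW_mulVec 1 A u
    rw [normSqW, one_mulVec] at h
    rw [h, normSqW_mulVec, hst, Matrix.mul_one, ← hss, transpose_mul, hst]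
    simp only [Matrix.mul_assoc]
  rw [hres, hA.posSemidef.normSqW_eq_dotProduct_sqrt u]
  exact hA.1.dotProduct_mulVec_le_iSup_eigenvalues_mul _

end normSqW

section expectedStep

variable {m q : ℕ} {A : Matrix (Fin m) (Fin m) ℝ} {p : Fin q → ℝ}
  {M : Fin q → Matrix (Fin m) (Fin m) ℝ}

theorem sum_mul_normSqW_sub_mulVec_mulVec (hA : A.PosSemidef) (hp1 : ∑ i, p i = 1)
    (hM : ∀ i, (M i).PosSemidef) (hMAM : ∀ i, M i * A * M i = M i) (u : Fin m → ℝ) :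
    ∑ i, p i * normSqW A (u - M i *ᵥ (A *ᵥ u))
      = normSqW A u - normSqW (hA.sqrt * (∑ i, p i • M i) * hA.sqrt) (hA.sqrt *ᵥ u) := by
  have hsym : ∀ {W : Matrix (Fin m) (Fin m) ℝ}, W.IsHermitian → Wᵀ = W := fun hW =>
    (isHermitian_iff_isSymm.mp hW).eq
  have hmean : hA.sqrt * (hA.sqrt * (∑ i, p i • M i) * hA.sqrt) * hA.sqrt
      = ∑ i, p i • (A * M i * A) := by
    calc _ = hA.sqrt * hA.sqrt * (∑ i, p i • M i) * (hA.sqrt * hA.sqrt) := by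
          simp only [Matrix.mul_assoc]
      _ = _ := by
          rw [hA.sqrt_mul_self, Finset.mul_sum, Finset.sum_mul]
          simp only [Matrix.mul_smul, Matrix.smul_mul]
  rw [normSqW_mulVec, hsym hA.isHermitian_sqrt, hmean, normSqW_sum_smul,
    ← one_mul (normSqW A u), ← hp1, Finset.sum_mul, ← Finset.sum_sub_distrib]
  refine Finset.sum_congr rfl fun i _ => ?_
  rw [normSqW_sub_mulVec_mulVec (hsym hA.1) (hsym (hM i).1) (hMAM i), mul_sub]

theorem sum_mul_normSqW_sub_mulVec_mulVec_le (hA : A.PosSemidef) (hp1 : ∑ i, p i = 1)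
    (hM : ∀ i, (M i).PosSemidef) (hMAM : ∀ i, M i * A * M i = M i)
    (hB : (hA.sqrt * (∑ i, p i • M i) * hA.sqrt).IsHermitian) (u : Fin m → ℝ) :
    ∑ i, p i * normSqW A (u - M i *ᵥ (A *ᵥ u)) ≤ (1 - ⨅ j, hB.eigenvalues j) * normSqW A u := by
  have hRayleigh : (⨅ j, hB.eigenvalues j) * normSqW A u
      ≤ normSqW (hA.sqrt * (∑ i, p i • M i) * hA.sqrt) (hA.sqrt *ᵥ u) := by
    rw [hA.normSqW_eq_dotProduct_sqrt]
    exact hB.iInf_eigenvalues_mul_dotProduct_self_le _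
  rw [sum_mul_normSqW_sub_mulVec_mulVec hA hp1 hM hMAM]
  linarith

theorem iInf_eigenvalues_nonneg (hA : A.PosSemidef) (hp : ∀ i, 0 ≤ p i)
    (hM : ∀ i, (M i).PosSemidef) (hB : (hA.sqrt * (∑ i, p i • M i) * hA.sqrt).IsHermitian) :
    0 ≤ ⨅ j, hB.eigenvalues j := by
  have hBpsd :=
    (posSemidef_sum Finset.univ fun i _ => (hM i).smul (hp i)).mul_mul_conjTranspose_same hA.sqrt
  rw [hA.isHermitian_sqrt.eq] at hBpsd
  exact Real.iInf_nonneg hBpsd.eigenvalues_nonneg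

theorem iInf_eigenvalues_le_one (hA : A.PosDef) (hp : ∀ i, 0 ≤ p i) (hp1 : ∑ i, p i = 1)
    (hM : ∀ i, (M i).PosSemidef) (hMAM : ∀ i, M i * A * M i = M i)
    (hB : (hA.posSemidef.sqrt * (∑ i, p i • M i) * hA.posSemidef.sqrt).IsHermitian) :
    ⨅ j, hB.eigenvalues j ≤ 1 := by
  rcases isEmpty_or_nonempty (Fin m) with hm | hm
  · simp [Real.iInf_of_isEmpty]
  obtain ⟨u, hu⟩ := exists_ne (0 : Fin m → ℝ)
  have hpos : 0 < normSqW A u := by simpa [normSqW] using hA.dotProduct_mulVec_pos hu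
  have hsum : 0 ≤ ∑ i, p i * normSqW A (u - M i *ᵥ (A *ᵥ u)) :=
    Finset.sum_nonneg fun i _ => mul_nonneg (hp i) (hA.posSemidef.normSqW_nonneg _)
  nlinarith [sum_mul_normSqW_sub_mulVec_mulVec_le hA.posSemidef hp1 hM hMAM hB u]

end expectedStep

theorem Finset.sum_mul_le_mul_sum_mul {ι : Type*} (s : Finset ι) {w f g : ι → ℝ} {C : ℝ}
    (hw : ∀ i ∈ s, 0 ≤ w i) (hfg : ∀ i ∈ s, f i ≤ C * g i) :
    ∑ i ∈ s, w i * f i ≤ C * ∑ i ∈ s, w i * g i := by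
  rw [Finset.mul_sum]
  refine Finset.sum_le_sum fun i hi => ?_
  rw [mul_left_comm]
  exact mul_le_mul_of_nonneg_left (hfg i hi) (hw i hi)

section spIter

variable {m q : ℕ} {A : Matrix (Fin m) (Fin m) ℝ} {b w0 : Fin m → ℝ}
  {H : Fin q → Matrix (Fin m) (Fin m) ℝ}

theorem spIter_snoc (t : ℕ) (σ : Fin t → Fin q) (i : Fin q) :
    spIter A b w0 H (t + 1) (Fin.snoc σ i)
      = spIter A b w0 H t σ - H i *ᵥ (A *ᵥ spIter A b w0 H t σ - b) := by
  simp [spIter]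

theorem sum_prod_mul_snoc {t : ℕ} (p : Fin q → ℝ) (f : (Fin (t + 1) → Fin q) → ℝ) :
    ∑ σ : Fin (t + 1) → Fin q, (∏ k, p (σ k)) * f σ
      = ∑ σ : Fin t → Fin q, (∏ k, p (σ k)) * ∑ i, p i * f (Fin.snoc σ i) := by
  rw [← (Fin.snocEquiv fun _ => Fin q).sum_comp, Fintype.sum_prod_type, Finset.sum_comm]
  simp [Fin.snocEquiv, Fin.prod_univ_castSucc, Finset.mul_sum, mul_assoc]

theorem spIter_snoc_sub {wstar : Fin m → ℝ} (hAw : A *ᵥ wstar = b) (t : ℕ)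
    (σ : Fin t → Fin q) (i : Fin q) :
    spIter A b w0 H (t + 1) (Fin.snoc σ i) - wstar
      = spIter A b w0 H t σ - wstar - H i *ᵥ (A *ᵥ (spIter A b w0 H t σ - wstar)) := by
  rw [spIter_snoc, ← hAw, ← mulVec_sub, sub_right_comm]

theorem sum_prod_mul_spIter_sub_le {p : Fin q → ℝ} (hp : ∀ i, 0 ≤ p i) {wstar : Fin m → ℝ}
    (hAw : A *ᵥ wstar = b) {L : (Fin m → ℝ) → ℝ} {c : ℝ} (hc : 0 ≤ c)
    (hL : ∀ e, ∑ i, p i * L (e - H i *ᵥ (A *ᵥ e)) ≤ c * L e) :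
    ∀ t, ∑ σ : Fin t → Fin q, (∏ k, p (σ k)) * L (spIter A b w0 H t σ - wstar)
      ≤ c ^ t * L (w0 - wstar)
  | 0 => by simp [spIter]
  | t + 1 => by
    calc ∑ σ : Fin (t + 1) → Fin q, (∏ k, p (σ k)) * L (spIter A b w0 H (t + 1) σ - wstar)
        = ∑ σ : Fin t → Fin q, (∏ k, p (σ k)) * ∑ i, p i *
            L (spIter A b w0 H t σ - wstar - H i *ᵥ (A *ᵥ (spIter A b w0 H t σ - wstar))) := by
          simp only [sum_prod_mul_snoc, spIter_snoc_sub hAw]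
      _ ≤ c * ∑ σ : Fin t → Fin q, (∏ k, p (σ k)) * L (spIter A b w0 H t σ - wstar) :=
          Finset.sum_mul_le_mul_sum_mul _ (fun σ _ => Finset.prod_nonneg fun k _ => hp (σ k))
            fun _ _ => hL _
      _ ≤ c ^ (t + 1) * L (w0 - wstar) := by
          rw [pow_succ', mul_assoc]
          exact mul_le_mul_of_nonneg_left (sum_prod_mul_spIter_sub_le hp hAw hc hL t) hc

end spIter

theorem sketch_and_project_linear_convergence_general {m q : ℕ}
    (A : Matrix (Fin m) (Fin m) ℝ) (hA : A.PosDef)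
    (b wstar : Fin m → ℝ) (hwstar : wstar = A⁻¹ *ᵥ b)
    (τ : Fin q → ℕ) (S : (i : Fin q) → Matrix (Fin m) (Fin (τ i)) ℝ)
    (p : Fin q → ℝ) (hp : ∀ i, 0 ≤ p i) (hp1 : ∑ i, p i = 1)
    (H : Fin q → Matrix (Fin m) (Fin m) ℝ)
    (hH : ∀ i, H i = S i * ((S i)ᵀ * A * S i)⁻¹ * (S i)ᵀ)
    (hHerm : (hA.posSemidef.sqrt * (∑ i, p i • H i) * hA.posSemidef.sqrt).IsHermitian)
    (w0 : Fin m → ℝ) :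
    let ρ := ⨅ j, hHerm.eigenvalues j
    0 ≤ ρ ∧ ρ ≤ 1 ∧
    ∀ t : ℕ,
      (∑ σ : Fin t → Fin q, (∏ k, p (σ k)) *
          normSqW A (spIter A b w0 H t σ - wstar))
        ≤ (1 - ρ) ^ t * normSqW A (w0 - wstar) ∧
      (∑ σ : Fin t → Fin q, (∏ k, p (σ k)) *
          ((A *ᵥ spIter A b w0 H t σ - b) ⬝ᵥ (A *ᵥ spIter A b w0 H t σ - b)))
        ≤ (1 - ρ) ^ t * (⨆ j, hA.1.eigenvalues j) * normSqW A (w0 - wstar) := by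
  intro ρ
  have hHpsd : ∀ i, (H i).PosSemidef := fun i => hH i ▸ posSemidef_sketchProj hA.posSemidef (S i)
  have hHAH : ∀ i, H i * A * H i = H i := fun i => hH i ▸ sketchProj_mul_mul_self A (S i)
  have hρ0 : 0 ≤ ρ := iInf_eigenvalues_nonneg hA.posSemidef hp hHpsd hHerm
  have hρ1 : ρ ≤ 1 := iInf_eigenvalues_le_one hA hp hp1 hHpsd hHAH hHerm
  have hAw : A *ᵥ wstar = b := by
    rw [hwstar, mulVec_mulVec, mul_nonsing_inv _ (isUnit_iff_ne_zero.2 hA.det_pos.ne'),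
      one_mulVec]
  have hmain := sum_prod_mul_spIter_sub_le (w0 := w0) hp hAw (sub_nonneg.2 hρ1)
    (sum_mul_normSqW_sub_mulVec_mulVec_le hA.posSemidef hp1 hHpsd hHAH hHerm)
  refine ⟨hρ0, hρ1, fun t => ⟨hmain t, ?_⟩⟩
  calc _ ≤ (⨆ j, hA.1.eigenvalues j) * ∑ σ : Fin t → Fin q, (∏ k, p (σ k)) *
          normSqW A (spIter A b w0 H t σ - wstar) :=
        Finset.sum_mul_le_mul_sum_mul _ (fun σ _ => Finset.prod_nonneg fun k _ => hp (σ k))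
          fun σ _ => by rw [← hAw, ← mulVec_sub]; exact hA.dotProduct_mulVec_self_le _
    _ ≤ (⨆ j, hA.1.eigenvalues j) * ((1 - ρ) ^ t * normSqW A (w0 - wstar)) :=
        mul_le_mul_of_nonneg_left (hmain t) (Real.iSup_nonneg fun j => (hA.eigenvalues_pos j).le)
    _ = _ := by ring

/-- **Linear convergence of sketch-and-project (Theorem 1).**
With `H_i = S_i (S_iᵀ A S_i)⁻¹ S_iᵀ`, `ρ = λ_min(A^{1/2} (Σ_i p_i H_i) A^{1/2})`
satisfies `0 ≤ ρ ≤ 1`, and the iterates converge linearly in L2: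
`E[‖wᵗ − w*‖²_A] ≤ (1−ρ)ᵗ ‖w⁰ − w*‖²_A` and
`E[‖A wᵗ − b‖²] ≤ (1−ρ)ᵗ λ_max(A) ‖w⁰ − w*‖²_A`.
(The hypothesis `hHerm` records the — always valid — fact that
`A^{1/2} (Σ_i p_i H_i) A^{1/2}` is symmetric, so that its eigenvalues are defined.) -/
theorem sketch_and_project_linear_convergence {m q : ℕ}
    (A : Matrix (Fin m) (Fin m) ℝ) (hA : A.PosDef)
    (b wstar : Fin m → ℝ) (hwstar : wstar = A⁻¹ *ᵥ b)
    (τ : Fin q → ℕ) (S : (i : Fin q) → Matrix (Fin m) (Fin (τ i)) ℝ)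
    (hS : ∀ i, IsUnit ((S i)ᵀ * A * S i))
    (p : Fin q → ℝ) (hp : ∀ i, 0 ≤ p i) (hp1 : ∑ i, p i = 1)
    (H : Fin q → Matrix (Fin m) (Fin m) ℝ)
    (hH : ∀ i, H i = S i * ((S i)ᵀ * A * S i)⁻¹ * (S i)ᵀ)
    (hHerm : (hA.posSemidef.sqrt * (∑ i, p i • H i) * hA.posSemidef.sqrt).IsHermitian)
    (w0 : Fin m → ℝ) :
    let ρ := ⨅ j, hHerm.eigenvalues j
    0 ≤ ρ ∧ ρ ≤ 1 ∧
    ∀ t : ℕ,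
      (∑ σ : Fin t → Fin q, (∏ k, p (σ k)) *
          normSqW A (spIter A b w0 H t σ - wstar))
        ≤ (1 - ρ) ^ t * normSqW A (w0 - wstar) ∧
      (∑ σ : Fin t → Fin q, (∏ k, p (σ k)) *
          ((A *ᵥ spIter A b w0 H t σ - b) ⬝ᵥ (A *ᵥ spIter A b w0 H t σ - b)))
        ≤ (1 - ρ) ^ t * (⨆ j, hA.1.eigenvalues j) * normSqW A (w0 - wstar) :=
  sketch_and_project_linear_convergence_general A hA b wstar hwstar τ S p hp hp1 H hH hHerm w0
end

section
/- Let A, W be m×m real symmetric positive definite matrices, b ∈ ℝ^m, and S ∈ ℝ^{m×τ} a matrix such that M = Sᵀ A W⁻¹ A S is invertible. With H_S = S M⁻¹ Sᵀ, f_S(w) = ½ (A w − b)ᵀ H_S (A w − b), and ∇_W f_S(w) = W⁻¹ A H_S (A w − b), the gradient norm–function identity holds: for every w ∈ ℝ^m, ‖∇_W f_S(w)‖²_W = 2 f_S(w), where ‖u‖²_W = uᵀ W u. In particular, H_S A W⁻¹ A H_S = H_S. -/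
open Matrix

/-- `H_S = S (Sᵀ A W⁻¹ A S)⁻¹ Sᵀ`. -/
noncomputable def sketchH {m τ : ℕ} (A W : Matrix (Fin m) (Fin m) ℝ)
    (S : Matrix (Fin m) (Fin τ) ℝ) : Matrix (Fin m) (Fin m) ℝ :=
  S * (Sᵀ * A * W⁻¹ * A * S)⁻¹ * Sᵀ

/-- `f_S(w) = ½ (A w − b)ᵀ H_S (A w − b)`. -/
noncomputable def sketchF {m τ : ℕ} (A W : Matrix (Fin m) (Fin m) ℝ)
    (S : Matrix (Fin m) (Fin τ) ℝ) (b w : Fin m → ℝ) : ℝ :=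
  (1 / 2) * ((A *ᵥ w - b) ⬝ᵥ (sketchH A W S *ᵥ (A *ᵥ w - b)))

/-- `∇_W f_S(w) = W⁻¹ A H_S (A w − b)`. -/
noncomputable def sketchGrad {m τ : ℕ} (A W : Matrix (Fin m) (Fin m) ℝ)
    (S : Matrix (Fin m) (Fin τ) ℝ) (b w : Fin m → ℝ) : Fin m → ℝ :=
  W⁻¹ *ᵥ (A *ᵥ (sketchH A W S *ᵥ (A *ᵥ w - b)))

lemma mulVec_dot {m : ℕ} (M : Matrix (Fin m) (Fin m) ℝ) (x y : Fin m → ℝ) :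
    (M *ᵥ x) ⬝ᵥ y = x ⬝ᵥ (Mᵀ *ᵥ y) := by
  rw [Matrix.dotProduct_mulVec, Matrix.vecMul_transpose]

/-- **Gradient norm–function identity (Lemma 3):** for every `w`,
`‖∇_W f_S(w)‖²_W = 2 f_S(w)`; in particular `H_S A W⁻¹ A H_S = H_S`. -/
theorem grad_norm_function_identity {m τ : ℕ}
    (A W : Matrix (Fin m) (Fin m) ℝ) (hA : A.PosDef) (hW : W.PosDef)
    (b : Fin m → ℝ) (S : Matrix (Fin m) (Fin τ) ℝ)
    (hS : IsUnit (Sᵀ * A * W⁻¹ * A * S)) :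
    (∀ w : Fin m → ℝ, normSqW W (sketchGrad A W S b w) = 2 * sketchF A W S b w) ∧
    sketchH A W S * A * W⁻¹ * A * sketchH A W S = sketchH A W S := by
  have hAT : Aᵀ = A := hA.isHermitian.eq
  have hWT : Wᵀ = W := hW.isHermitian.eq
  have hWiT : (W⁻¹)ᵀ = W⁻¹ := by rw [Matrix.transpose_nonsing_inv, hWT]
  have hWWi : W * W⁻¹ = 1 := Matrix.mul_nonsing_inv W (isUnit_iff_ne_zero.mpr hW.det_pos.ne')
  have hM : (Sᵀ * A * W⁻¹ * A * S)⁻¹ * (Sᵀ * A * W⁻¹ * A * S) = 1 :=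
    Matrix.nonsing_inv_mul _ ((Matrix.isUnit_iff_isUnit_det _).mp hS)
  set H := sketchH A W S with hHdef
  have hH2 : H * A * W⁻¹ * A * H = H := by
    rw [hHdef]
    calc S * (Sᵀ * A * W⁻¹ * A * S)⁻¹ * Sᵀ * A * W⁻¹ * A * sketchH A W S
        = S * (((Sᵀ * A * W⁻¹ * A * S)⁻¹ * (Sᵀ * A * W⁻¹ * A * S)) * ((Sᵀ * A * W⁻¹ * A * S)⁻¹ * Sᵀ)) := by
          simp only [sketchH, Matrix.mul_assoc]
      _ = sketchH A W S := by rw [hM, Matrix.one_mul, sketchH, ← Matrix.mul_assoc]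
  have hHT : Hᵀ = H := by
    rw [hHdef]
    simp only [sketchH, Matrix.transpose_mul, Matrix.transpose_transpose,
      Matrix.transpose_nonsing_inv, hAT, hWiT, Matrix.mul_assoc]
  refine ⟨?_, hH2⟩
  intro w
  set r := A *ᵥ w - b with hr
  have hG : sketchGrad A W S b w = (W⁻¹ * A * H) *ᵥ r := by
    rw [sketchGrad, ← hHdef, ← hr, Matrix.mulVec_mulVec, Matrix.mulVec_mulVec]
  have hkey : (W⁻¹ * A * H)ᵀ * (W * (W⁻¹ * A * H)) = H := by
    have h1 : (W⁻¹ * A * H)ᵀ = H * A * W⁻¹ := by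
      simp only [Matrix.transpose_mul, hHT, hAT, hWiT, Matrix.mul_assoc]
    have h2 : W * (W⁻¹ * A * H) = A * H := by
      rw [← Matrix.mul_assoc, ← Matrix.mul_assoc, hWWi, Matrix.one_mul]
    rw [h1, h2, Matrix.mul_assoc, ← Matrix.mul_assoc (W⁻¹), ← Matrix.mul_assoc,
      ← Matrix.mul_assoc, hH2]
  calc normSqW W (sketchGrad A W S b w)
      = ((W⁻¹ * A * H) *ᵥ r) ⬝ᵥ (W *ᵥ ((W⁻¹ * A * H) *ᵥ r)) := by rw [normSqW, hG]
    _ = r ⬝ᵥ (((W⁻¹ * A * H)ᵀ * (W * (W⁻¹ * A * H))) *ᵥ r) := by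
        rw [mulVec_dot, Matrix.mulVec_mulVec, Matrix.mulVec_mulVec, Matrix.mul_assoc]
    _ = r ⬝ᵥ (H *ᵥ r) := by rw [hkey]
    _ = 2 * sketchF A W S b w := by rw [sketchF, ← hHdef, ← hr]; ring
end

section
/- Let A, W be m×m real symmetric positive definite matrices, b ∈ ℝ^m, w* = A⁻¹b, and S ∈ ℝ^{m×τ} a matrix such that Sᵀ A W⁻¹ A S is invertible. Let γ ∈ (0,1) and let w⁺ = w − γ ∇_W f_S(w), where ∇_W f_S(w) = W⁻¹ A H_S (A w − b) and H_S = S (Sᵀ A W⁻¹ A S)⁻¹ Sᵀ. Then ‖w⁺ − w*‖²_W ≤ ‖w − w*‖²_W − 2 γ (1 − γ) f_S(w), where f_S(w) = ½ (A w − b)ᵀ H_S (A w − b) and ‖u‖²_W = uᵀ W u. -/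
open Matrix

/-- Move a matrix across a dot product. -/
lemma dot_mulVec_move {a b : ℕ} (N : Matrix (Fin a) (Fin b) ℝ) (u : Fin a → ℝ)
    (v : Fin b → ℝ) : u ⬝ᵥ (N *ᵥ v) = (Nᵀ *ᵥ u) ⬝ᵥ v := by
  rw [dotProduct_mulVec, ← Matrix.mulVec_transpose]

/-- Move a matrix across a dot product, other direction. -/
lemma dot_mulVec_move' {a b : ℕ} (N : Matrix (Fin a) (Fin b) ℝ) (u : Fin b → ℝ)
    (v : Fin a → ℝ) : (N *ᵥ u) ⬝ᵥ v = u ⬝ᵥ (Nᵀ *ᵥ v) := by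
  rw [dotProduct_comm, dot_mulVec_move, dotProduct_comm]

/-- **One-step decrease of the SGD/sketch-and-project step with step size `γ ∈ (0,1)`:**
`‖w − γ ∇_W f_S(w) − w*‖²_W ≤ ‖w − w*‖²_W − 2γ(1−γ) f_S(w)`. -/
theorem sgd_one_step_decrease {m τ : ℕ}
    (A W : Matrix (Fin m) (Fin m) ℝ) (hA : A.PosDef) (hW : W.PosDef)
    (b wstar : Fin m → ℝ) (hwstar : wstar = A⁻¹ *ᵥ b)
    (S : Matrix (Fin m) (Fin τ) ℝ)
    (hS : IsUnit (Sᵀ * A * W⁻¹ * A * S))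
    (γ : ℝ) (hγ0 : 0 < γ) (hγ1 : γ < 1) (w : Fin m → ℝ) :
    normSqW W (w - γ • sketchGrad A W S b w - wstar)
      ≤ normSqW W (w - wstar) - 2 * γ * (1 - γ) * sketchF A W S b w := by
  set M : Matrix (Fin τ) (Fin τ) ℝ := Sᵀ * A * W⁻¹ * A * S with hM
  set H : Matrix (Fin m) (Fin m) ℝ := sketchH A W S with hH
  set e : Fin m → ℝ := A *ᵥ w - b with he
  set r : Fin m → ℝ := w - wstar with hr
  set g : Fin m → ℝ := sketchGrad A W S b w with hg
  have hAdet : IsUnit A.det := hA.det_pos.ne'.isUnit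
  have hWdet : IsUnit W.det := hW.det_pos.ne'.isUnit
  have hMdet : IsUnit M.det := (Matrix.isUnit_iff_isUnit_det M).1 hS
  have hAs : Aᵀ = A := by
    rw [← Matrix.conjTranspose_eq_transpose_of_trivial]; exact hA.isHermitian.eq
  have hWis : (W⁻¹)ᵀ = W⁻¹ := by
    rw [← Matrix.conjTranspose_eq_transpose_of_trivial]; exact hW.inv.isHermitian.eq
  have hMs : Mᵀ = M := by
    simp [hM, Matrix.transpose_mul, Matrix.mul_assoc, hAs, hWis]
  have hMis : (M⁻¹)ᵀ = M⁻¹ := by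
    rw [Matrix.transpose_nonsing_inv, hMs]
  have hM' : M = Sᵀ * (A * (W⁻¹ * (A * S))) := by rw [hM]; simp [Matrix.mul_assoc]
  have hHs : Hᵀ = H := by
    rw [hH, sketchH, ← hM]
    simp [Matrix.transpose_mul, hMis, Matrix.mul_assoc]
  have hMiM : M⁻¹ * M = 1 := Matrix.nonsing_inv_mul M hMdet
  have hMMi : M * M⁻¹ = 1 := Matrix.mul_nonsing_inv M hMdet
  -- key projection identity: H A W⁻¹ A H = H
  have hHAH : H * (A * (W⁻¹ * (A * H))) = H := by
    have hfold : ∀ X : Matrix (Fin τ) (Fin m) ℝ,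
        Sᵀ * (A * (W⁻¹ * (A * (S * X)))) = M * X := by
      intro X; rw [hM']; simp [Matrix.mul_assoc]
    calc H * (A * (W⁻¹ * (A * H)))
        = S * (M⁻¹ * (Sᵀ * (A * (W⁻¹ * (A * (S * (M⁻¹ * Sᵀ))))))) := by
          simp only [hH, sketchH, Matrix.mul_assoc, ← hM']
      _ = S * (M⁻¹ * (M * (M⁻¹ * Sᵀ))) := by rw [hfold]
      _ = S * (M⁻¹ * Sᵀ) := by rw [← Matrix.mul_assoc M⁻¹ M, hMiM, Matrix.one_mul]
      _ = H := by simp only [hH, sketchH, Matrix.mul_assoc, ← hM']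
  -- A r = e
  have hAr : A *ᵥ r = e := by
    rw [hr, Matrix.mulVec_sub, hwstar, Matrix.mulVec_mulVec, Matrix.mul_nonsing_inv A hAdet,
      Matrix.one_mulVec, he]
  -- W g = A H e
  have hWg : W *ᵥ g = A *ᵥ (H *ᵥ e) := by
    rw [hg, sketchGrad, ← he, ← hH, Matrix.mulVec_mulVec, Matrix.mul_nonsing_inv W hWdet,
      Matrix.one_mulVec]
  set q : ℝ := e ⬝ᵥ (H *ᵥ e) with hq
  have h2 : r ⬝ᵥ (W *ᵥ g) = q := by
    rw [hWg, dot_mulVec_move, hAs, hAr, hq]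
  have h3 : g ⬝ᵥ (W *ᵥ r) = q := by
    have hWsym : Wᵀ = W := by
      rw [← Matrix.conjTranspose_eq_transpose_of_trivial]; exact hW.isHermitian.eq
    rw [← h2, dot_mulVec_move, hWsym, dotProduct_comm]
  have h4 : g ⬝ᵥ (W *ᵥ g) = q := by
    rw [hWg, hg, sketchGrad, ← he, ← hH]
    rw [dot_mulVec_move', hWis, dot_mulVec_move', hAs, dot_mulVec_move', hHs]
    simp only [Matrix.mulVec_mulVec]
    rw [hHAH, hq]
  -- nonnegativity of q
  have hMinvPD : (M⁻¹).PosDef := by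
    have hMPD : M.PosDef := by
      rw [Matrix.posDef_iff_dotProduct_mulVec]
      constructor
      · rw [Matrix.IsHermitian, Matrix.conjTranspose_eq_transpose_of_trivial, hMs]
      · intro x hx
        have hMx : M *ᵥ x ≠ 0 := by
          intro h0
          apply hx
          have : (M⁻¹ * M) *ᵥ x = M⁻¹ *ᵥ (M *ᵥ x) := (Matrix.mulVec_mulVec _ _ _).symm
          rw [hMiM, Matrix.one_mulVec, h0, Matrix.mulVec_zero] at this
          exact this
        have hSx : S *ᵥ x ≠ 0 := by
          intro h0
          apply hMx
          rw [hM]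
          rw [show Sᵀ * A * W⁻¹ * A * S = Sᵀ * (A * (W⁻¹ * (A * S))) by
            simp [Matrix.mul_assoc]]
          rw [← Matrix.mulVec_mulVec, ← Matrix.mulVec_mulVec, ← Matrix.mulVec_mulVec,
            ← Matrix.mulVec_mulVec, h0]
          simp
        have hASx : A *ᵥ (S *ᵥ x) ≠ 0 := by
          intro h0
          apply hSx
          have : (A⁻¹ * A) *ᵥ (S *ᵥ x) = A⁻¹ *ᵥ (A *ᵥ (S *ᵥ x)) :=
            (Matrix.mulVec_mulVec _ _ _).symm
          rw [Matrix.nonsing_inv_mul A hAdet, Matrix.one_mulVec, h0,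
            Matrix.mulVec_zero] at this
          exact this
        have hpos := hW.inv.dotProduct_mulVec_pos hASx
        simp only [star_trivial] at hpos ⊢
        calc (0:ℝ) < (A *ᵥ (S *ᵥ x)) ⬝ᵥ (W⁻¹ *ᵥ (A *ᵥ (S *ᵥ x))) := hpos
          _ = x ⬝ᵥ (M *ᵥ x) := by
              rw [dot_mulVec_move', hAs, dot_mulVec_move']
              simp only [Matrix.mulVec_mulVec]
              rw [hM']
    exact hMPD.inv
  have hq0 : 0 ≤ q := by
    have hHe : H *ᵥ e = S *ᵥ (M⁻¹ *ᵥ (Sᵀ *ᵥ e)) := by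
      rw [hH, sketchH, ← hM, ← Matrix.mulVec_mulVec, ← Matrix.mulVec_mulVec]
    rw [hq, hHe, dot_mulVec_move S]
    have := hMinvPD.posSemidef.dotProduct_mulVec_nonneg (Sᵀ *ᵥ e)
    simpa [star_trivial] using this
  -- put everything together
  have hfq : sketchF A W S b w = (1/2) * q := by rw [sketchF, ← he, ← hH, hq]
  have hexp : normSqW W (w - γ • g - wstar)
      = normSqW W r - γ * (g ⬝ᵥ (W *ᵥ r)) - γ * (r ⬝ᵥ (W *ᵥ g)) + γ * γ * (g ⬝ᵥ (W *ᵥ g)) := by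
    have : w - γ • g - wstar = r - γ • g := by rw [hr]; abel
    rw [this, hr]
    simp only [normSqW, Matrix.mulVec_sub, Matrix.mulVec_smul, sub_dotProduct,
      dotProduct_sub, smul_dotProduct, dotProduct_smul, smul_eq_mul]
    ring
  rw [hexp, h2, h3, h4, hfq]
  nlinarith [mul_nonneg hγ0.le hq0, mul_nonneg (mul_nonneg hγ0.le hγ0.le) hq0]
end

section
/- Let g^0, g^1, g^2, … be an arbitrary sequence of vectors in ℝ^m (the stochastic gradients ∇_W f_{S_k}(w^k)), let (η_k)_{k≥0} and (ζ_k)_{k≥0} be real sequences with ζ_k ≥ 0 for all k, and define γ_k = η_k/(ζ_{k+1}+1) and β_k = ζ_k/(ζ_{k+1}+1). Consider (a) the heavy-ball iterates w^{k+1} = w^k − γ_k g^k + β_k (w^k − w^{k−1}) with w^{−1} = w^0, and (b) the iterate-averaging iterates z^k = z^{k−1} − η_k g^k, w^{k+1} = (1 − 1/(ζ_{k+1}+1)) w^k + (1/(ζ_{k+1}+1)) z^k with z^{−1} = w^0, ζ_0 = 0, and the same starting point w^0. Then the two recursions generate exactly the same sequence (w^k)_{k≥0}. -/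
/-- **Equivalence of heavy-ball momentum and the iterate-averaging parametrization
(Proposition 1).**  Here `whb k` and `wav k` both stand for the iterate `w^{k-1}`
(so `whb 0 = wav 0 = w^{-1} = w⁰` and `whb 1 = wav 1 = w⁰`), `z k` stands for
`z^{k-1}` (so `z 0 = z^{-1} = w⁰`), and `g k` is the stochastic gradient
`∇_W f_{S_k}(w^k)` used at step `k`.  With `γ_k = η_k/(ζ_{k+1}+1)` and
`β_k = ζ_k/(ζ_{k+1}+1)`, the heavy-ball recursion
`w^{k+1} = w^k − γ_k g^k + β_k (w^k − w^{k-1})` and the iterate-averaging recursion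
`z^k = z^{k-1} − η_k g^k`, `w^{k+1} = (1 − 1/(ζ_{k+1}+1)) w^k + (1/(ζ_{k+1}+1)) z^k`
generate exactly the same iterates. -/
theorem heavy_ball_iterate_averaging_equiv {m : ℕ}
    (g : ℕ → Fin m → ℝ) (η ζ : ℕ → ℝ)
    (hζ0 : ζ 0 = 0) (hζ : ∀ k, 0 ≤ ζ k)
    (γ β : ℕ → ℝ)
    (hγ : ∀ k, γ k = η k / (ζ (k + 1) + 1))
    (hβ : ∀ k, β k = ζ k / (ζ (k + 1) + 1))
    (w0 : Fin m → ℝ)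
    (whb : ℕ → Fin m → ℝ)
    (hhb0 : whb 0 = w0) (hhb1 : whb 1 = w0)
    (hhb : ∀ k, whb (k + 2)
      = whb (k + 1) - γ k • g k + β k • (whb (k + 1) - whb k))
    (z wav : ℕ → Fin m → ℝ)
    (hz0 : z 0 = w0) (hav0 : wav 0 = w0) (hav1 : wav 1 = w0)
    (hz : ∀ k, z (k + 1) = z k - η k • g k)
    (hav : ∀ k, wav (k + 2)
      = (1 - 1 / (ζ (k + 1) + 1)) • wav (k + 1) + (1 / (ζ (k + 1) + 1)) • z (k + 1)) :
    ∀ k, whb k = wav k := by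
  have hc : ∀ k, ζ k + 1 ≠ 0 := fun k => by have := hζ k; positivity
  have key : ∀ k, whb k = wav k ∧ whb (k + 1) = wav (k + 1) ∧
      z k = (ζ k + 1) • wav (k + 1) - ζ k • wav k := by
    intro k
    induction k with
    | zero =>
      refine ⟨hhb0.trans hav0.symm, hhb1.trans hav1.symm, ?_⟩
      rw [hz0, hζ0, hav0, hav1]
      funext i; simp
    | succ n ih =>
      obtain ⟨h0, h1, hzi⟩ := ih
      have hc' := hc (n + 1)
      have hznew : z (n + 1) = z n - η n • g n := hz n
      have havn := hav n
      have hhbn := hhb n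
      refine ⟨h1, ?_, ?_⟩
      · rw [hhbn, havn, hznew, hzi, h0, h1, hγ n, hβ n]
        funext i
        simp only [Pi.add_apply, Pi.sub_apply, Pi.smul_apply, smul_eq_mul]
        field_simp
        ring
      · rw [havn]
        funext i
        simp only [Pi.add_apply, Pi.sub_apply, Pi.smul_apply, smul_eq_mul]
        field_simp
        ring
  exact fun k => (key k).1
end

section
/- Let A, W be m×m real symmetric positive definite matrices, b ∈ ℝ^m, w* = A⁻¹b. Let (η_k)_{k≥0} be reals with 0 < η_k < 1, ζ_0 = 0 and ζ_k ≥ 0 for k ≥ 1, and let S_0, S_1, … be matrices (each with Sᵀ_k A W⁻¹ A S_k invertible). Define iterates from w^{−1} = w^0 and z^{−1} = w^0 by z^k = z^{k−1} − η_k ∇_W f_{S_k}(w^k) and w^{k+1} = (1 − 1/(ζ_{k+1}+1)) w^k + (1/(ζ_{k+1}+1)) z^k. Then for every k ≥ 0: ‖z^k − w*‖²_W ≤ ‖z^{k−1} − w*‖²_W − 2 η_k (1 + ζ_k − η_k) f_{S_k}(w^k) + 2 η_k ζ_k f_{S_k}(w^{k−1}). -/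
open Matrix

lemma mulVec_dot' {p q : ℕ} (M : Matrix (Fin p) (Fin q) ℝ) (a : Fin q → ℝ) (c : Fin p → ℝ) :
    (M *ᵥ a) ⬝ᵥ c = a ⬝ᵥ (Mᵀ *ᵥ c) := by
  symm; rw [dotProduct_mulVec, vecMul_transpose]

lemma dot_symm' {p : ℕ} {M : Matrix (Fin p) (Fin p) ℝ} (hM : Mᵀ = M) (a c : Fin p → ℝ) :
    a ⬝ᵥ (M *ᵥ c) = c ⬝ᵥ (M *ᵥ a) := by
  rw [dotProduct_comm, mulVec_dot', hM]

/-- **One-step Lyapunov inequality for momentum sketch-and-project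
(equation (eq:ai8ha88ja4ap)).**  Here `z k` stands for `z^{k-1}` and `w k` for
`w^{k-1}` (so `z 0 = w 0 = w 1 = w⁰`).  Along the iterate-averaging recursion
`z^k = z^{k-1} − η_k ∇_W f_{S_k}(w^k)`,
`w^{k+1} = (1 − 1/(ζ_{k+1}+1)) w^k + (1/(ζ_{k+1}+1)) z^k`, one has
`‖z^k − w*‖²_W ≤ ‖z^{k-1} − w*‖²_W − 2η_k(1+ζ_k−η_k) f_{S_k}(w^k)
  + 2η_kζ_k f_{S_k}(w^{k-1})`. -/
theorem momentum_one_step_lyapunov {m : ℕ}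
    (A W : Matrix (Fin m) (Fin m) ℝ) (hA : A.PosDef) (hW : W.PosDef)
    (b wstar : Fin m → ℝ) (hwstar : wstar = A⁻¹ *ᵥ b)
    (η ζ : ℕ → ℝ) (hη : ∀ k, 0 < η k ∧ η k < 1)
    (hζ0 : ζ 0 = 0) (hζ : ∀ k, 0 ≤ ζ k)
    (τ : ℕ → ℕ) (S : (k : ℕ) → Matrix (Fin m) (Fin (τ k)) ℝ)
    (hS : ∀ k, IsUnit ((S k)ᵀ * A * W⁻¹ * A * S k))
    (w0 : Fin m → ℝ) (z w : ℕ → Fin m → ℝ)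
    (hz0 : z 0 = w0) (hw0 : w 0 = w0) (hw1 : w 1 = w0)
    (hz : ∀ k, z (k + 1) = z k - η k • sketchGrad A W (S k) b (w (k + 1)))
    (hw : ∀ k, w (k + 2)
      = (1 - 1 / (ζ (k + 1) + 1)) • w (k + 1) + (1 / (ζ (k + 1) + 1)) • z (k + 1)) :
    ∀ k, normSqW W (z (k + 1) - wstar)
      ≤ normSqW W (z k - wstar)
        - 2 * η k * (1 + ζ k - η k) * sketchF A W (S k) b (w (k + 1))
        + 2 * η k * ζ k * sketchF A W (S k) b (w k) := by
  -- basic symmetry / invertibility facts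
  have hAsym : Aᵀ = A := by
    rw [← conjTranspose_eq_transpose_of_trivial]; exact hA.1
  have hWsym : Wᵀ = W := by
    rw [← conjTranspose_eq_transpose_of_trivial]; exact hW.1
  have hAdet : IsUnit A.det := isUnit_iff_ne_zero.2 hA.det_pos.ne'
  have hWdet : IsUnit W.det := isUnit_iff_ne_zero.2 hW.det_pos.ne'
  have hWinvsym : (W⁻¹)ᵀ = W⁻¹ := by rw [transpose_nonsing_inv, hWsym]
  have hWWinv : W * W⁻¹ = 1 := mul_nonsing_inv W hWdet
  have hAb : A *ᵥ wstar = b := by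
    rw [hwstar, mulVec_mulVec, mul_nonsing_inv A hAdet, one_mulVec]
  -- N := A W⁻¹ A is positive semidefinite
  set N : Matrix (Fin m) (Fin m) ℝ := A * W⁻¹ * A with hN
  have hNpsd : N.PosSemidef := by
    have := hW.inv.posSemidef.mul_mul_conjTranspose_same A
    rwa [conjTranspose_eq_transpose_of_trivial, hAsym] at this
  intro k
  obtain ⟨hη0, hη1⟩ := hη k
  set M : Matrix (Fin (τ k)) (Fin (τ k)) ℝ := (S k)ᵀ * A * W⁻¹ * A * S k with hM
  have hMN : M = (S k)ᵀ * N * S k := by simp only [hM, hN, Matrix.mul_assoc]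
  have hMpsd : M.PosSemidef := by
    have := hNpsd.conjTranspose_mul_mul_same (S k)
    rwa [conjTranspose_eq_transpose_of_trivial, ← hMN] at this
  have hMsym : Mᵀ = M := by
    rw [← conjTranspose_eq_transpose_of_trivial]; exact hMpsd.1
  have hMdet : IsUnit M.det := (isUnit_iff_isUnit_det M).1 (hS k)
  have hMinvM : M⁻¹ * M = 1 := nonsing_inv_mul M hMdet
  have hMinvsym : (M⁻¹)ᵀ = M⁻¹ := by rw [transpose_nonsing_inv, hMsym]
  have hMinvpsd : (M⁻¹).PosSemidef := by
    have h1 : (M⁻¹)ᵀ * M * M⁻¹ = M⁻¹ := by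
      rw [hMinvsym, Matrix.mul_assoc, ← Matrix.mul_assoc, hMinvM, one_mul]
    have := hMpsd.conjTranspose_mul_mul_same M⁻¹
    rwa [conjTranspose_eq_transpose_of_trivial, h1] at this
  set Hm : Matrix (Fin m) (Fin m) ℝ := sketchH A W (S k) with hHm
  have hHmM : Hm = S k * M⁻¹ * (S k)ᵀ := by rw [hHm, sketchH, hM]
  have hHpsd : Hm.PosSemidef := by
    have := hMinvpsd.mul_mul_conjTranspose_same (S k)
    rwa [conjTranspose_eq_transpose_of_trivial, ← hHmM] at this
  have hHsym : Hmᵀ = Hm := by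
    rw [← conjTranspose_eq_transpose_of_trivial]; exact hHpsd.1
  have hHdot : ∀ v : Fin m → ℝ, 0 ≤ v ⬝ᵥ (Hm *ᵥ v) := by
    intro v; simpa using hHpsd.dotProduct_mulVec_nonneg v
  -- projection identity
  have hproj : Hm * N * Hm = Hm := by
    have h2 : Hm * N * Hm = S k * (M⁻¹ * M * (M⁻¹ * (S k)ᵀ)) := by
      rw [hHmM, hMN]; simp only [Matrix.mul_assoc]
    rw [h2, hMinvM, Matrix.one_mul, hHmM, Matrix.mul_assoc]
  have hcomp : Hm * A * W⁻¹ * A * Hm = Hm := by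
    rw [show Hm * A * W⁻¹ * A * Hm = Hm * N * Hm from by
      simp only [hN, Matrix.mul_assoc], hproj]
  -- vectors
  set r : Fin m → ℝ := A *ᵥ w (k + 1) - b with hr
  set x : Fin m → ℝ := A *ᵥ w k - b with hx
  set u : Fin m → ℝ := z k - wstar with hu
  set g : Fin m → ℝ := sketchGrad A W (S k) b (w (k + 1)) with hg
  have hgdef : g = W⁻¹ *ᵥ (A *ᵥ (Hm *ᵥ r)) := rfl
  have hWg : W *ᵥ g = A *ᵥ (Hm *ᵥ r) := by
    rw [hgdef, mulVec_mulVec, hWWinv, one_mulVec]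
  -- ⟨g,Wg⟩ = rᵀ H r
  have hgWg : g ⬝ᵥ (W *ᵥ g) = r ⬝ᵥ (Hm *ᵥ r) := by
    rw [hWg, hgdef, mulVec_dot' W⁻¹, hWinvsym, mulVec_dot' A, hAsym, mulVec_dot' Hm, hHsym]
    simp only [mulVec_mulVec]
    rw [show Hm * (A * (W⁻¹ * (A * Hm))) = Hm * A * W⁻¹ * A * Hm from by
      simp only [Matrix.mul_assoc], hcomp]
  -- expansion of the step
  have hzz : z (k + 1) - wstar = u - η k • g := by
    rw [hz k, hu, sub_right_comm]
  have expand : normSqW W (u - η k • g)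
      = normSqW W u - 2 * η k * (u ⬝ᵥ (W *ᵥ g)) + η k ^ 2 * (g ⬝ᵥ (W *ᵥ g)) := by
    have hcomm : g ⬝ᵥ (W *ᵥ u) = u ⬝ᵥ (W *ᵥ g) := dot_symm' hWsym g u
    simp only [normSqW, mulVec_sub, mulVec_smul, sub_dotProduct, dotProduct_sub,
      smul_dotProduct, dotProduct_smul, smul_eq_mul]
    rw [hcomm]; ring
  -- the averaging identity
  have hzk : z k = (1 + ζ k) • w (k + 1) - ζ k • w k := by
    cases k with
    | zero => rw [hz0, hw1, hw0, hζ0]; simp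
    | succ j =>
      have hc : ζ (j + 1) + 1 ≠ 0 := by
        have := hζ (j + 1); positivity
      funext i
      have hi := congrFun (hw j) i
      simp only [Pi.add_apply, Pi.smul_apply, smul_eq_mul, Pi.sub_apply] at hi ⊢
      rw [hi]; field_simp; ring
  have haux : ∀ v y : Fin m → ℝ, (v - wstar) ⬝ᵥ (A *ᵥ y) = (A *ᵥ v - b) ⬝ᵥ y := by
    intro v y
    have h := mulVec_dot' Aᵀ (v - wstar) y
    rw [transpose_transpose] at h
    rw [← h, hAsym, mulVec_sub, hAb]
  have hdotu : u ⬝ᵥ (A *ᵥ (Hm *ᵥ r))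
      = (1 + ζ k) * (r ⬝ᵥ (Hm *ᵥ r)) - ζ k * (x ⬝ᵥ (Hm *ᵥ r)) := by
    have huu : u = (1 + ζ k) • (w (k + 1) - wstar) - ζ k • (w k - wstar) := by
      rw [hu, hzk]; funext i
      simp only [Pi.sub_apply, Pi.smul_apply, smul_eq_mul]
      ring
    rw [huu, sub_dotProduct, smul_dotProduct, smul_dotProduct, smul_eq_mul, smul_eq_mul,
      haux (w (k + 1)) (Hm *ᵥ r), haux (w k) (Hm *ᵥ r)]
  -- inequalities from positive semidefiniteness
  have hp := hHdot r
  have hs := hHdot x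
  have hq : 2 * (x ⬝ᵥ (Hm *ᵥ r)) ≤ x ⬝ᵥ (Hm *ᵥ x) + r ⬝ᵥ (Hm *ᵥ r) := by
    have h0 := hHdot (x - r)
    have hxr : r ⬝ᵥ (Hm *ᵥ x) = x ⬝ᵥ (Hm *ᵥ r) := dot_symm' hHsym r x
    simp only [mulVec_sub, sub_dotProduct, dotProduct_sub] at h0
    linarith
  -- values of f
  have hF1 : sketchF A W (S k) b (w (k + 1)) = (1 / 2) * (r ⬝ᵥ (Hm *ᵥ r)) := rfl
  have hF0 : sketchF A W (S k) b (w k) = (1 / 2) * (x ⬝ᵥ (Hm *ᵥ x)) := rfl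
  rw [hzz, expand, hgWg, hWg, hdotu, hF1, hF0]
  nlinarith [mul_nonneg hη0.le hp,
    mul_nonneg (mul_nonneg hη0.le (hζ k))
      (by linarith : (0:ℝ) ≤ x ⬝ᵥ (Hm *ᵥ x) + r ⬝ᵥ (Hm *ᵥ r) - 2 * (x ⬝ᵥ (Hm *ᵥ r)))]
end

section
/- Let A be an m×m real symmetric positive definite matrix and let s_1, …, s_q ∈ ℝ^m be unit vectors (‖s_i‖₂ = 1). Consider the single-column sketch distribution taking S = s_i with probability p_i = (s_iᵀ A s_i) / (Σ_{j=1}^q s_jᵀ A s_j), and with W = A let H_{s_i} = s_i (s_iᵀ A s_i)⁻¹ s_iᵀ. Let F = [s_1, …, s_q] ∈ ℝ^{m×q}. Then E[H_S] := Σ_{i=1}^q p_i H_{s_i} = F Fᵀ / (Σ_{j=1}^q s_jᵀ A s_j), and consequently λ_min(E[H_S]) = λ_min(F Fᵀ) / (Σ_{j=1}^q s_jᵀ A s_j). -/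
open Matrix Pointwise

lemma iInf_eigenvalues_zero {m : ℕ} (M : Matrix (Fin m) (Fin m) ℝ)
    (hM0 : M = 0) (hM : M.IsHermitian) : (⨅ j, hM.eigenvalues j) = 0 := by
  subst hM0
  rcases isEmpty_or_nonempty (Fin m) with hE | hE
  · simp [iInf, Set.range_eq_empty, Real.sInf_empty]
  · have : ∀ j, hM.eigenvalues j = 0 := by
      intro j
      have h := hM.eigenvalues_mem_spectrum_real j
      have : Nontrivial (Matrix (Fin m) (Fin m) ℝ) := inferInstance
      rw [spectrum.zero_eq] at h
      simpa using h
    simp only [this]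
    exact ciInf_const

lemma iInf_eigenvalues_smul {m : ℕ} {M N : Matrix (Fin m) (Fin m) ℝ} {c : ℝ} (hc : 0 < c)
    (h : N = c • M) (hN : N.IsHermitian) (hM : M.IsHermitian) :
    (⨅ j, hN.eigenvalues j) = c * ⨅ j, hM.eigenvalues j := by
  subst h
  rcases isEmpty_or_nonempty (Fin m) with hE | hE
  · simp [iInf, Set.range_eq_empty, Real.sInf_empty]
  · have hr : Set.range hN.eigenvalues = c • Set.range hM.eigenvalues := by
      rw [← hN.spectrum_real_eq_range_eigenvalues, ← hM.spectrum_real_eq_range_eigenvalues,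
        spectrum.smul_eq_smul c M (hM.spectrum_real_eq_range_eigenvalues ▸ Set.range_nonempty _)]
    have h1 : (⨅ j, hN.eigenvalues j) = sInf (Set.range hN.eigenvalues) := by
      rw [iInf]
    have h2 : (⨅ j, hM.eigenvalues j) = sInf (Set.range hM.eigenvalues) := by
      rw [iInf]
    rw [h1, h2, hr, Real.sInf_smul_of_nonneg hc.le, smul_eq_mul]

/-- **Expected projection matrix for single-column sketches with convenient
probabilities (Lemma 5):**  With unit vectors `s_1, …, s_q`, probabilities
`p_i = s_iᵀ A s_i / Σ_j s_jᵀ A s_j`, `H_{s_i} = s_i (s_iᵀ A s_i)⁻¹ s_iᵀ` and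
`F = [s_1, …, s_q]`, one has `E[H_S] = F Fᵀ / Σ_j s_jᵀ A s_j` and consequently
`λ_min(E[H_S]) = λ_min(F Fᵀ) / Σ_j s_jᵀ A s_j`.
(The hypotheses `hEHherm`, `hFFherm` record the — always valid — facts that
`E[H_S]` and `F Fᵀ` are symmetric, so that their eigenvalues are defined.) -/
theorem single_column_sketch_lambda_min {m q : ℕ}
    (A : Matrix (Fin m) (Fin m) ℝ) (hA : A.PosDef)
    (s : Fin q → (Fin m → ℝ)) (hs : ∀ i, s i ⬝ᵥ s i = 1)
    (p : Fin q → ℝ)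
    (hp : ∀ i, p i = (s i ⬝ᵥ (A *ᵥ s i)) / ∑ j, s j ⬝ᵥ (A *ᵥ s j))
    (F : Matrix (Fin m) (Fin q) ℝ) (hF : F = Matrix.of fun i j => s j i)
    (EH : Matrix (Fin m) (Fin m) ℝ)
    (hEH : EH = ∑ i, p i • ((s i ⬝ᵥ (A *ᵥ s i))⁻¹ • Matrix.vecMulVec (s i) (s i)))
    (hEHherm : EH.IsHermitian) (hFFherm : (F * Fᵀ).IsHermitian) :
    EH = (∑ j, s j ⬝ᵥ (A *ᵥ s j))⁻¹ • (F * Fᵀ) ∧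
    (⨅ j, hEHherm.eigenvalues j)
      = (⨅ j, hFFherm.eigenvalues j) / (∑ j, s j ⬝ᵥ (A *ᵥ s j)) := by
  have hq : ∀ i, 0 < s i ⬝ᵥ (A *ᵥ s i) := by
    intro i
    have hne : s i ≠ 0 := by
      intro h
      have := hs i
      rw [h] at this
      simp at this
    simpa using hA.dotProduct_mulVec_pos hne
  have hFF : F * Fᵀ = ∑ i, Matrix.vecMulVec (s i) (s i) := by
    ext a b
    simp [Matrix.mul_apply, hF, Matrix.vecMulVec_apply, Matrix.sum_apply, mul_comm]
  rcases Nat.eq_zero_or_pos q with hq0 | hq0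
  · subst hq0
    have hEH0 : EH = 0 := by simpa using hEH
    have hFF0 : F * Fᵀ = 0 := by simpa using hFF
    constructor
    · simp [hEH0, hFF0]
    · rw [iInf_eigenvalues_zero EH hEH0 hEHherm, iInf_eigenvalues_zero _ hFF0 hFFherm]
      simp
  · have hT : 0 < ∑ j, s j ⬝ᵥ (A *ᵥ s j) := by
      apply Finset.sum_pos (fun i _ => hq i)
      exact ⟨⟨0, hq0⟩, Finset.mem_univ _⟩
    set T := ∑ j, s j ⬝ᵥ (A *ᵥ s j) with hTdef
    have key : EH = T⁻¹ • (F * Fᵀ) := by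
      rw [hEH, hFF, Finset.smul_sum]
      apply Finset.sum_congr rfl
      intro i _
      rw [hp i, smul_smul]
      congr 1
      field_simp [(hq i).ne']
    refine ⟨key, ?_⟩
    rw [iInf_eigenvalues_smul (inv_pos.mpr hT) key hEHherm hFFherm]
    rw [div_eq_inv_mul]
end
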